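/- For all secondary colors p and q and all integers k, l: if k − l = Δ(p, q) then β(l_q) + 1 ⪰ β(k_p); and if k − l > Δ(p, q) then β(k_p) ≻ α(l_q). -/

import Mathlib

open Classical in
/-- `χ(P)` is `1` if `P` holds and `0` otherwise. -/
noncomputable def chi (P : Prop) : ℤ := if P then 1 else 0

/-- Colors: `Sum.inl i` is the primary color `a_i`; `Sum.inr (i, j)` (with `i < j`)
is the secondary color `a_i a_j`. -/
abbrev Col := ℕ ⊕ (ℕ × ℕ)

/-- A colored part: an integer size together with a color. -/
structure CPart where
  size : ℤ
  col : Col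

/-- Numerical key realizing the total order
`a_1a_2 < ⋯ < a_1a_n < a_1 < a_2a_3 < ⋯ < a_{n-1}a_n < a_{n-1} < a_n`
on the primary and secondary colors (for indices in `[1, n]`). -/
def colKey (n : ℕ) : Col → ℕ
  | Sum.inl i => i * (n + 2) + (n + 1)
  | Sum.inr (i, j) => i * (n + 2) + j

/-- Order `p ≤ q` on colors. -/
def colLE (n : ℕ) (p q : Col) : Prop := colKey n p ≤ colKey n q

/-- Order `p < q` on colors. -/
def colLT (n : ℕ) (p q : Col) : Prop := colKey n p < colKey n q

def isPri : Col → Prop := fun c => ∃ i, c = Sum.inl i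

/-- Special pairs of secondary colors:
`(a_r a_s, a_x a_y)` with `x < y < r < s` or `r < x < y < s`. -/
def SP : Col → Col → Prop
  | Sum.inr (r, s), Sum.inr (x, y) => (x < y ∧ y < r ∧ r < s) ∨ (r < x ∧ x < y ∧ y < s)
  | _, _ => False

/-- `x ≻ y`, i.e. `k_p ≻ l_q ↔ k - l ≥ χ(p ≤ q)`. -/
def succR (n : ℕ) (x y : CPart) : Prop := chi (colLE n x.col y.col) ≤ x.size - y.size

/-- `x ⪰ y` (i.e. `x ≻ y` or `x = y`), equivalently `k - l ≥ χ(p < q)`. -/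
def succeqR (n : ℕ) (x y : CPart) : Prop := chi (colLT n x.col y.col) ≤ x.size - y.size

/-- Add an integer to the size of a part (the color is unchanged). -/
def shift (x : CPart) (m : ℤ) : CPart := ⟨x.size + m, x.col⟩

/-- `x ▷ y` : `k_p ⪰ (l+1)_q` if `p` or `q` is primary, `k_p ≻ (l+1)_q` if both secondary. -/
def rtri (n : ℕ) (x y : CPart) : Prop :=
  ((isPri x.col ∨ isPri y.col) ∧ succeqR n x (shift y 1)) ∨
  (¬(isPri x.col ∨ isPri y.col) ∧ succR n x (shift y 1))

/-- `x ≫ y` : `k_p ⪰ (l+1)_q` if `p` or `q` is primary; `k_p ≻ (l+1)_q` if both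
secondary with `(p,q) ∉ SP`; `k_p ≻ l_q` if `(p,q) ∈ SP`. -/
def gg (n : ℕ) (x y : CPart) : Prop :=
  ((isPri x.col ∨ isPri y.col) ∧ succeqR n x (shift y 1)) ∨
  (¬(isPri x.col ∨ isPri y.col) ∧ ¬ SP x.col y.col ∧ succR n x (shift y 1)) ∨
  (SP x.col y.col ∧ succR n x y)

/-- Upper half `α` of a secondary part of size `k` and color `a_i a_j`:
`α((2m)_{a_ia_j}) = m_{a_j}`, `α((2m+1)_{a_ia_j}) = (m+1)_{a_i}`. -/
def alphaP (k : ℤ) (i j : ℕ) : CPart :=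
  if k % 2 = 0 then ⟨k / 2, Sum.inl j⟩ else ⟨(k + 1) / 2, Sum.inl i⟩

/-- Lower half `β` of a secondary part of size `k` and color `a_i a_j`:
`β((2m)_{a_ia_j}) = m_{a_i}`, `β((2m+1)_{a_ia_j}) = m_{a_j}`. -/
def betaP (k : ℤ) (i j : ℕ) : CPart :=
  if k % 2 = 0 then ⟨k / 2, Sum.inl i⟩ else ⟨(k - 1) / 2, Sum.inl j⟩

/-- `Δ(p, q) = 1 + χ(p ≤ q) - χ((p,q) ∈ SP)`. -/
noncomputable def Delta (n : ℕ) (p q : Col) : ℤ :=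
  1 + chi (colLE n p q) - chi (SP p q)

/-- Members of `P`: parts of positive size with a (valid) primary color. -/
def inP (n : ℕ) (x : CPart) : Prop :=
  1 ≤ x.size ∧ ∃ i, 1 ≤ i ∧ i ≤ n ∧ x.col = Sum.inl i

/-- Members of `S`: parts of size at least 2 with a (valid) secondary color. -/
def inS (n : ℕ) (x : CPart) : Prop :=
  2 ≤ x.size ∧ ∃ i j, 1 ≤ i ∧ i < j ∧ j ≤ n ∧ x.col = Sum.inr (i, j)

/-- `O`: sequences `λ_1 ≻ ⋯ ≻ λ_t` of parts in `P`. -/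
def memO (n : ℕ) (l : List CPart) : Prop :=
  (∀ x ∈ l, inP n x) ∧ l.Chain' (succR n)

/-- `E`: sequences `ν_1 ≫ ⋯ ≫ ν_t` of parts in `P ⊔ S`. -/
def memE (n : ℕ) (l : List CPart) : Prop :=
  (∀ x ∈ l, inP n x ∨ inS n x) ∧ l.Chain' (gg n)

/-- `E₂`: sequences `ν_1 ▷ ⋯ ▷ ν_t` of parts in `P ⊔ S`. -/
def memE2 (n : ℕ) (l : List CPart) : Prop :=
  (∀ x ∈ l, inP n x ∨ inS n x) ∧ l.Chain' (rtri n)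

/-- The size of a partition: the sum of the sizes of its parts. -/
def psize (l : List CPart) : ℤ := (l.map CPart.size).sum

/-- The multiset of primary-color indices contributed by one color. -/
def colContrib : Col → Multiset ℕ
  | Sum.inl i => {i}
  | Sum.inr (i, j) => {i, j}

/-- The color product of a partition, as a multiset of primary-color indices. -/
def colorProd (l : List CPart) : Multiset ℕ := (l.map (fun x => colContrib x.col)).sum

/-- The expanded sequence of a partition: each primary part is kept (tag `0`); each
secondary part is replaced by its upper half (tag `1`) followed by its lower half
(tag `2`). The third component records the original part. -/
def expandTag (l : List CPart) : List (CPart × ℕ × CPart) :=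
  (l.map (fun x =>
    match x.col with
    | Sum.inl _ => [(x, 0, x)]
    | Sum.inr (i, j) => [(alphaP x.size i j, 1, x), (betaP x.size i j, 2, x)])).flatten

/-- Length `p + 2s` of the expanded sequence. -/
def elen (l : List CPart) : ℕ := (expandTag l).length

/-- `ν_x` (1-based indexing in the expanded sequence), with the convention
`ν_{p+2s+1} = 0_{a_n}` (and the same default beyond). -/
def nuAt (n : ℕ) (l : List CPart) (x : ℕ) : CPart :=
  ((expandTag l).getD (x - 1) (⟨0, Sum.inl n⟩, 3, ⟨0, Sum.inl n⟩)).1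

/-- The tag of position `x` (1-based): `0` primary, `1` upper half, `2` lower half,
`3` out of range. -/
def tagAt (l : List CPart) (x : ℕ) : ℕ :=
  ((expandTag l).getD (x - 1) (⟨0, Sum.inl 0⟩, 3, ⟨0, Sum.inl 0⟩)).2.1

/-- The original (primary or secondary) part occupying position `x`. -/
def origAt (n : ℕ) (l : List CPart) (x : ℕ) : CPart :=
  ((expandTag l).getD (x - 1) (⟨0, Sum.inl n⟩, 3, ⟨0, Sum.inl n⟩)).2.2

/-- `I`: the set of (1-based) indices of upper halves of secondary parts. -/
def Iset (l : List CPart) : Set ℕ := {x | 1 ≤ x ∧ tagAt l x = 1}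

/-- `J`: the set of (1-based) indices of primary parts. -/
def Jset (l : List CPart) : Set ℕ := {x | 1 ≤ x ∧ tagAt l x = 0}

/-- `j = min((i, p+2s+1] ∩ (J ∪ {p+2s+1}))`. -/
noncomputable def nextJ (l : List CPart) (i : ℕ) : ℕ :=
  sInf {x | i < x ∧ (x ∈ Jset l ∨ x = elen l + 1)}

/-- The condition `ν_{i'+1} ⊁ ν_u + (u - i')/2 - 1` for all `i' ∈ [i, u) ∩ I`. -/
def brCond (n : ℕ) (l : List CPart) (i u : ℕ) : Prop :=
  ∀ i' ∈ Iset l, i ≤ i' → i' < u →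
    ¬ succR n (nuAt n l (i' + 1)) (shift (nuAt n l u) (((u : ℤ) - (i' : ℤ)) / 2 - 1))

open Classical in
/-- The Bridge `Br_ν(i)`. -/
noncomputable def Br (n : ℕ) (l : List CPart) (i : ℕ) : ℕ :=
  if brCond n l i (nextJ l i) then nextJ l i
  else if {u | u ∈ Iset l ∧ i < u ∧ u < nextJ l i ∧ brCond n l i u}.Nonempty then
    sSup {u | u ∈ Iset l ∧ i < u ∧ u < nextJ l i ∧ brCond n l i u}
  else i

/-- `TS(ν)`: indices of the troublesome secondary parts. -/
def TSet (n : ℕ) (l : List CPart) : Set ℕ :=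
  {i | i ∈ Iset l ∧ (i + 2) ∈ Iset l ∧
    ¬ rtri n (origAt n l i) (origAt n l (i + 2)) ∧
    (i = 1 ∨ rtri n (origAt n l (i - 1)) (origAt n l i))}

/-- `E₁`: partitions in `E` such that for every `i ∈ TS(ν)` with `Br_ν(i) > i` one has
`ν_i + ν_{i+1} ≻ ν_{Br_ν(i)} + (Br_ν(i) - i)/2`. -/
def memE1 (n : ℕ) (l : List CPart) : Prop :=
  memE n l ∧ ∀ i ∈ TSet n l, i < Br n l i →
    succR n (origAt n l i)
      (shift (nuAt n l (Br n l i)) (((Br n l i : ℤ) - (i : ℤ)) / 2))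

/-- `hasIdx i c` : the color `c` contains the primary color `a_i`. -/
def hasIdx (i : ℕ) : Col → Bool
  | Sum.inl j => j == i
  | Sum.inr (j, k) => j == i || k == i

/-- Number of parts of `l` whose color contains `a_i`. -/
def countIdx (i : ℕ) (l : List CPart) : ℕ := l.countP (fun x => hasIdx i x.col)

/-- A partition into `u` distinct positive parts. -/
def distinctParts (u : ℕ) (l : List ℕ) : Prop :=
  l.Chain' (· > ·) ∧ (∀ x ∈ l, 0 < x) ∧ l.length = u


/-! Both halves of a secondary part are primary parts, of sizes `⌊k/2⌋` (for `β`) and `⌈l/2⌉`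
(for `α`), whose colors depend only on the parity of the size. Primary colors are ordered by their
indices and secondary colors lexicographically, so each claim becomes a linear inequality between
`⌊k/2⌋` and `⌈l/2⌉`, checked over the parities of `k` and `l`, the comparison of `p` and `q` and
whether `(p, q)` is special. -/

lemma colLE_inl_inl_iff (n a b : ℕ) : colLE n (.inl a) (.inl b) ↔ a ≤ b := by
  simp only [colLE, colKey, add_le_add_iff_right, Nat.mul_le_mul_right_iff (by omega : 0 < n + 2)]

lemma colLT_inl_inl_iff (n a b : ℕ) : colLT n (.inl a) (.inl b) ↔ a < b := by
  simp only [colLT, colKey, add_lt_add_iff_right, Nat.mul_lt_mul_right (by omega : 0 < n + 2)]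

lemma colLE_inr_inr_iff {n r s x y : ℕ} (hs : s ≤ n + 1) (hy : y ≤ n + 1) :
    colLE n (.inr (r, s)) (.inr (x, y)) ↔ r < x ∨ r = x ∧ s ≤ y := by
  simp only [colLE, colKey]
  rcases lt_trichotomy r x with h | rfl | h
  · have := Nat.succ_mul r (n + 2) ▸ Nat.mul_le_mul_right (n + 2) h
    omega
  · omega
  · have := Nat.succ_mul x (n + 2) ▸ Nat.mul_le_mul_right (n + 2) h
    omega

lemma succR_inl_inl_iff (n : ℕ) (u v : ℤ) (a b : ℕ) :
    succR n ⟨u, .inl a⟩ ⟨v, .inl b⟩ ↔ chi (a ≤ b) ≤ u - v := by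
  simp only [succR, colLE_inl_inl_iff]

lemma succeqR_inl_inl_iff (n : ℕ) (u v : ℤ) (a b : ℕ) :
    succeqR n ⟨u, .inl a⟩ ⟨v, .inl b⟩ ↔ chi (a < b) ≤ u - v := by
  simp only [succeqR, colLT_inl_inl_iff]

lemma betaP_eq (k : ℤ) (i j : ℕ) :
    betaP k i j = ⟨k / 2, .inl (if k % 2 = 0 then i else j)⟩ := by
  unfold betaP
  split_ifs <;> simp only [CPart.mk.injEq, and_true]
  omega

lemma alphaP_eq (l : ℤ) (i j : ℕ) :
    alphaP l i j = ⟨(l + 1) / 2, .inl (if l % 2 = 0 then j else i)⟩ := by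
  unfold alphaP
  split_ifs <;> simp only [CPart.mk.injEq, and_true]
  omega

lemma Delta_inr_inr {n r s x y : ℕ} (hs : s ≤ n + 1) (hy : y ≤ n + 1) :
    Delta n (.inr (r, s)) (.inr (x, y)) =
      1 + chi (r < x ∨ r = x ∧ s ≤ y) - chi (x < y ∧ y < r ∧ r < s ∨ r < x ∧ x < y ∧ y < s) := by
  rw [Delta, colLE_inr_inr_iff hs hy]
  rfl

lemma succeqR_shift_betaP_of_sub_eq_Delta {n r s x y : ℕ} (hrs : r < s) (hxy : x < y)
    (hs : s ≤ n + 1) (hy : y ≤ n + 1) {k l : ℤ}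
    (h : k - l = Delta n (.inr (r, s)) (.inr (x, y))) :
    succeqR n (shift (betaP l x y) 1) (betaP k r s) := by
  rw [Delta_inr_inr hs hy] at h
  simp only [betaP_eq, shift, succeqR_inl_inl_iff, chi] at h ⊢
  split_ifs at h ⊢ <;> omega

lemma succR_betaP_alphaP_of_Delta_lt_sub {n r s x y : ℕ} (hrs : r < s)
    (hs : s ≤ n + 1) (hy : y ≤ n + 1) {k l : ℤ}
    (h : Delta n (.inr (r, s)) (.inr (x, y)) < k - l) :
    succR n (betaP k r s) (alphaP l x y) := by
  rw [Delta_inr_inr hs hy] at h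
  simp only [betaP_eq, alphaP_eq, succR_inl_inl_iff, chi] at h ⊢
  split_ifs at h ⊢ <;> omega

theorem stmt_11_general (n r s x y : ℕ) (hrs : r < s) (hsn : s ≤ n)
    (hxy : x < y) (hyn : y ≤ n) (k l : ℤ) :
    (k - l = Delta n (Sum.inr (r, s)) (Sum.inr (x, y)) →
      succeqR n (shift (betaP l x y) 1) (betaP k r s)) ∧
    (Delta n (Sum.inr (r, s)) (Sum.inr (x, y)) < k - l →
      succR n (betaP k r s) (alphaP l x y)) :=
  ⟨succeqR_shift_betaP_of_sub_eq_Delta hrs hxy (by omega) (by omega),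
    succR_betaP_alphaP_of_Delta_lt_sub hrs (by omega) (by omega)⟩

/-- For secondary colors `p, q` and integers `k, l`:
if `k − l = Δ(p, q)` then `β(l_q) + 1 ⪰ β(k_p)`; if `k − l > Δ(p, q)` then
`β(k_p) ≻ α(l_q)`. -/
theorem stmt_11 (n r s x y : ℕ) (hr : 1 ≤ r) (hrs : r < s) (hsn : s ≤ n)
    (hx : 1 ≤ x) (hxy : x < y) (hyn : y ≤ n) (k l : ℤ) :
    (k - l = Delta n (Sum.inr (r, s)) (Sum.inr (x, y)) →
      succeqR n (shift (betaP l x y) 1) (betaP k r s)) ∧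
    (Delta n (Sum.inr (r, s)) (Sum.inr (x, y)) < k - l →
      succR n (betaP k r s) (alphaP l x y)) :=
  stmt_11_general n r s x y hrs hsn hxy hyn k l
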